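/- Let 1 ≤ p < ∞, k ≥ 1, and let μ ∈ M^p be a measure whose support contains at least k points. Then the following two quantities are strictly positive: D_min := inf over optimal codebooks c* ∈ C_k and over pairs 1 ≤ j ≠ j' ≤ k+1 of ‖c_j* − c_{j'}*‖ (where c_{k+1}* := ∂Ω and the distance of a point to ∂Ω is its Euclidean distance to the diagonal), and m_min := inf over optimal codebooks c* ∈ C_k and over 1 ≤ j ≤ k of μ(V_j(c*)). -/

import Mathlib

open MeasureTheory ENNReal Set

noncomputable section

abbrev E2 := EuclideanSpace ℝ (Fin 2)

/-- The open half-plane `Ω` above the diagonal. -/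
def Omega : Set E2 := {x | x 0 < x 1}

/-- The diagonal `∂Ω`. -/
def diagSet : Set E2 := {x | x 0 = x 1}

/-- `Ω̄ = Ω ∪ ∂Ω`. -/
def OmegaBar : Set E2 := Omega ∪ diagSet

/-- Euclidean distance of a point to the diagonal. -/
def dDiag (x : E2) : ℝ := Metric.infDist x diagSet

/-- Total persistence `Pers_p(μ) = ∫_Ω ‖x-∂Ω‖^p dμ(x)`. -/
def Pers (p : ℝ) (μ : Measure E2) : ℝ≥0∞ :=
  ∫⁻ x in Omega, ENNReal.ofReal (dDiag x ^ p) ∂μ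

/-- Admissible partial transport plans: measures on `Ω̄ × Ω̄` whose first (resp. second)
marginal coincides with `μ` (resp. `ν`) on `Ω`. -/
def Adm (μ ν : Measure E2) : Set (Measure (E2 × E2)) :=
  {π | (π.map Prod.fst).restrict Omega = μ.restrict Omega ∧
       (π.map Prod.snd).restrict Omega = ν.restrict Omega ∧
       π ((OmegaBar ×ˢ OmegaBar)ᶜ) = 0}

/-- `OT_p(μ,ν)^p`, the optimal partial transport cost. -/
def OTpow (p : ℝ) (μ ν : Measure E2) : ℝ≥0∞ :=
  ⨅ π ∈ Adm μ ν, ∫⁻ z, ENNReal.ofReal (dist z.1 z.2 ^ p) ∂π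

/-- The distance `OT_p(μ,ν)`. -/
def OTp (p : ℝ) (μ ν : Measure E2) : ℝ≥0∞ := (OTpow p μ ν) ^ (1/p)

/-- The closed ℓ¹-ball `A_L` of radius `L/√2` centered at `(-L/√8, L/√8)`. -/
def ballA (L : ℝ) : Set E2 :=
  {x | |x 0 + L / Real.sqrt 8| + |x 1 - L / Real.sqrt 8| ≤ L / Real.sqrt 2}

/-- Membership in `M^q_{L,M}`: supported in `Ω`, in `A_L`, with `Pers_q ≤ M`. -/
def MemMq (q L M : ℝ) (μ : Measure E2) : Prop :=
  μ Omegaᶜ = 0 ∧ μ (ballA L)ᶜ = 0 ∧ Pers q μ ≤ ENNReal.ofReal M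

/-- Empirical EPD `μ̄_n = (1/n)(μ₁ + ⋯ + μ_n)` of a sample of `n` persistence measures. -/
def empEPD (n : ℕ) (ω : Fin n → Measure E2) : Measure E2 :=
  (n : ℝ≥0∞)⁻¹ • ∑ i : Fin n, ω i

/-- Distance from `x` to the `j`-th centroid, the last index standing for the diagonal. -/
def cdistC (k : ℕ) (c : Fin k → E2) (j : Fin (k+1)) (x : E2) : ℝ :=
  if h : (j : ℕ) < k then dist x (c ⟨j, h⟩) else dDiag x

/-- Voronoi cells `V_j(c)` (the last cell being the diagonal cell `V_{k+1}`). -/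
def Vcell (k : ℕ) (c : Fin k → E2) (j : Fin (k+1)) : Set E2 :=
  {x ∈ Omega | (∀ j' : Fin (k+1), j' < j → cdistC k c j x ≤ cdistC k c j' x) ∧
               (∀ j' : Fin (k+1), j < j' → cdistC k c j x < cdistC k c j' x)}

/-- The distortion `R_{k,p}(c)`. -/
def distortion (p : ℝ) (μ : Measure E2) (k : ℕ) (c : Fin k → E2) : ℝ≥0∞ :=
  (∑ j : Fin (k+1), ∫⁻ x in Vcell k c j, ENNReal.ofReal (cdistC k c j x ^ p) ∂μ) ^ (1/p)

/-- The optimal distortion `R_k^* = inf {R_{k,p}(c) : c ∈ Ω̄^k}`. -/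
def Rstar (p : ℝ) (μ : Measure E2) (k : ℕ) : ℝ≥0∞ :=
  ⨅ (c : Fin k → E2) (_ : ∀ j, c j ∈ OmegaBar), distortion p μ k c

/-- The set `C_k` of optimal codebooks. -/
def Copt (p : ℝ) (μ : Measure E2) (k : ℕ) : Set (Fin k → E2) :=
  {c | (∀ j, c j ∈ OmegaBar) ∧ distortion p μ k c = Rstar p μ k}

/-- Support of a measure. -/
def msupport (μ : Measure E2) : Set E2 :=
  {x | ∀ U : Set E2, IsOpen U → x ∈ U → 0 < μ U}

/-- Euclidean distance between codebooks seen as vectors of `ℝ^{2k}`. -/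
def cbDist (k : ℕ) (c c' : Fin k → E2) : ℝ :=
  Real.sqrt (∑ j : Fin k, dist (c j) (c' j) ^ 2)

/-- Euclidean norm on `(ℝ²)^k`. -/
def pnorm2 (k : ℕ) (v : Fin k → E2) : ℝ := Real.sqrt (∑ j : Fin k, ‖v j‖ ^ 2)

/-- Distance between the `j`-th and `j'`-th centroids, the last index standing
for the diagonal. -/
def cdistPt (k : ℕ) (c : Fin k → E2) (j j' : Fin (k+1)) : ℝ :=
  if h : (j : ℕ) < k then
    (if h' : (j' : ℕ) < k then dist (c ⟨j, h⟩) (c ⟨j', h'⟩) else dDiag (c ⟨j, h⟩))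
  else (if h' : (j' : ℕ) < k then dDiag (c ⟨j', h'⟩) else 0)

/-- The set `N(c)` of points lying on a boundary between two Voronoi cells. -/
def Nset (k : ℕ) (c : Fin k → E2) : Set E2 :=
  {x ∈ Omega | ∃ j j' : Fin (k+1), j < j' ∧ x ∈ Vcell k c j ∧ cdistC k c j x = cdistC k c j' x}

/-- The `t`-neighborhood `A^t` of `A` in `Ω`. -/
def tN (A : Set E2) (t : ℝ) : Set E2 := {x ∈ Omega | ∃ a ∈ A, dist x a ≤ t}

/-- `w₂(c, m)_j = ∫_{V_j(c)} x dm(x)`. -/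
def w2 (k : ℕ) (c : Fin k → E2) (m : Measure E2) (j : Fin k) : E2 :=
  ∫ x in Vcell k c j.castSucc, x ∂m

/-- Absolute difference in `ℝ≥0∞`. -/
def eabs (a b : ℝ≥0∞) : ℝ≥0∞ := (a - b) + (b - a)

/-!
Write `R_{k,p}(c)^p = ∫_Ω min_j ‖x - c_j‖^p dμ`. If, for an optimal codebook `c`, the open set
of points strictly closer to `c_j` than to every other centroid and to `∂Ω` were `μ`-null,
then `c_j` would be useless: either `μ` lives on the `k - 1` other centroids, contradicting the
`k` support points, or moving `c_j` onto a support point away from the other centroids strictly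
lowers the distortion. So these open cells have positive mass, which puts every optimal `c_j` in
`Ω` and makes them pairwise distinct.

Along any sequence of codebooks, a subsequence has each centroid converging or escaping to
infinity, and an escaping centroid is no better than one on `∂Ω`; by Fatou, optimal codebooks
exist and form a compact set, on which none of them escapes. `D_min` is then the minimum of a
continuous positive function on a compact set, and `m_min` is bounded below by the minimum of
the lower semicontinuous positive map `c ↦ μ(open cell)`.
-/

open Filter Topology

lemma continuous_coord (i : Fin 2) : Continuous fun x : E2 => x i :=
  (EuclideanSpace.proj i).continuous

lemma isOpen_Omega : IsOpen Omega := isOpen_lt (continuous_coord 0) (continuous_coord 1)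

lemma isClosed_OmegaBar : IsClosed OmegaBar := by
  have : OmegaBar = {x : E2 | x 0 ≤ x 1} := by
    ext x
    simp only [OmegaBar, Omega, diagSet, mem_union, mem_ofPred_eq, le_iff_lt_or_eq]
  rw [this]
  exact isClosed_le (continuous_coord 0) (continuous_coord 1)

lemma zero_mem_diagSet : (0 : E2) ∈ diagSet := by simp [diagSet]

lemma diagSet_subset_OmegaBar : diagSet ⊆ OmegaBar := subset_union_right

lemma dDiag_le_dist {y : E2} (hy : y ∈ diagSet) (x : E2) : dDiag x ≤ dist x y :=
  Metric.infDist_le_dist_of_mem hy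

lemma continuous_dDiag : Continuous dDiag := Metric.continuous_infDist_pt _

lemma dDiag_pos {x : E2} (hx : x ∈ Omega) : 0 < dDiag x :=
  (isClosed_eq (continuous_coord 0) (continuous_coord 1)).notMem_iff_infDist_pos
    ⟨0, zero_mem_diagSet⟩ |>.1 hx.ne

lemma notMem_diagSet_of_mem_Omega {x : E2} (hx : x ∈ Omega) : x ∉ diagSet := hx.ne

lemma msupport_eq_support (μ : Measure E2) : msupport μ = μ.support := by
  rw [Measure.support_eq_forall_isOpen]
  ext x
  exact forall_congr' fun U => imp.swap

section Cells

variable {k : ℕ}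

@[simp] lemma cdistC_castSucc (c : Fin k → E2) (i : Fin k) (x : E2) :
    cdistC k c i.castSucc x = dist x (c i) := by
  simp [cdistC]

@[simp] lemma cdistC_last (c : Fin k → E2) (x : E2) : cdistC k c (Fin.last k) x = dDiag x := by
  simp [cdistC]

lemma cdistC_nonneg (c : Fin k → E2) (j : Fin (k + 1)) (x : E2) : 0 ≤ cdistC k c j x := by
  cases j using Fin.lastCases <;> simp [Metric.infDist_nonneg, dDiag]

lemma continuous_cdistC (c : Fin k → E2) (j : Fin (k + 1)) : Continuous (cdistC k c j) := by
  cases j using Fin.lastCases with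
  | last => exact (funext (cdistC_last c) : cdistC k c _ = dDiag) ▸ continuous_dDiag
  | cast i => exact (funext (cdistC_castSucc c i) : cdistC k c _ = _) ▸
      continuous_id.dist continuous_const

lemma cdistC_le_add_dist (c c' : Fin k → E2) (j : Fin (k + 1)) (x : E2) :
    cdistC k c j x ≤ cdistC k c' j x + dist c c' := by
  cases j using Fin.lastCases with
  | last => simp
  | cast i =>
    simp only [cdistC_castSucc]
    linarith [dist_triangle x (c' i) (c i), dist_le_pi_dist c' c i, dist_comm c c']

lemma measurableSet_Vcell (c : Fin k → E2) (j : Fin (k + 1)) : MeasurableSet (Vcell k c j) := by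
  have hm := fun j => (continuous_cdistC c j).measurable
  refine isOpen_Omega.measurableSet.inter (MeasurableSet.inter ?_ ?_) <;>
    refine measurableSet_setOfPred.2 (Measurable.forall fun j' => measurable_const.imp ?_)
  · exact measurableSet_setOfPred.1 (measurableSet_le (hm j) (hm j'))
  · exact measurableSet_setOfPred.1 (measurableSet_lt (hm j) (hm j'))

open Function in
lemma pairwise_disjoint_Vcell (c : Fin k → E2) : Pairwise (Disjoint on (Vcell k c)) := by
  intro j j' hne
  wlog hlt : j < j' generalizing j j'
  · exact (this hne.symm (hne.lt_or_gt.resolve_left hlt)).symm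
  exact disjoint_left.2 fun x hx hx' => (hx.2.2 j' hlt).not_ge (hx'.2.1 j hlt)

end Cells

section NearestCentroid

variable {k : ℕ}

def minCdist (k : ℕ) (c : Fin k → E2) (x : E2) : ℝ :=
  Finset.univ.inf' Finset.univ_nonempty fun j => cdistC k c j x

def minCdistExcept (k : ℕ) (c : Fin k → E2) (j : Fin k) (x : E2) : ℝ :=
  (Finset.univ.erase j.castSucc).inf'
    ⟨Fin.last k, Finset.mem_erase.2 ⟨(Fin.castSucc_lt_last j).ne', Finset.mem_univ _⟩⟩
    fun j' => cdistC k c j' x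

lemma minCdist_le (c : Fin k → E2) (j : Fin (k + 1)) (x : E2) :
    minCdist k c x ≤ cdistC k c j x :=
  Finset.inf'_le _ (Finset.mem_univ j)

lemma le_minCdist {c : Fin k → E2} {x : E2} {t : ℝ} (h : ∀ j, t ≤ cdistC k c j x) :
    t ≤ minCdist k c x :=
  Finset.le_inf' _ _ fun j _ => h j

lemma minCdist_nonneg (c : Fin k → E2) (x : E2) : 0 ≤ minCdist k c x :=
  le_minCdist fun j => cdistC_nonneg c j x

lemma minCdist_le_dDiag (c : Fin k → E2) (x : E2) : minCdist k c x ≤ dDiag x := by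
  simpa using minCdist_le c (Fin.last k) x

lemma continuous_minCdist (c : Fin k → E2) : Continuous (minCdist k c) :=
  Continuous.finset_inf'_apply _ fun j _ => continuous_cdistC c j

lemma minCdistExcept_le (c : Fin k → E2) {j : Fin k} {j' : Fin (k + 1)}
    (hj' : j' ≠ j.castSucc) (x : E2) : minCdistExcept k c j x ≤ cdistC k c j' x :=
  Finset.inf'_le _ (Finset.mem_erase.2 ⟨hj', Finset.mem_univ _⟩)

lemma le_minCdistExcept {c : Fin k → E2} {j : Fin k} {x : E2} {t : ℝ}
    (h : ∀ j' ≠ j.castSucc, t ≤ cdistC k c j' x) : t ≤ minCdistExcept k c j x :=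
  Finset.le_inf' _ _ fun j' hj' => h j' (Finset.mem_erase.1 hj').1

lemma minCdistExcept_nonneg (c : Fin k → E2) (j : Fin k) (x : E2) :
    0 ≤ minCdistExcept k c j x :=
  le_minCdistExcept fun j' _ => cdistC_nonneg c j' x

lemma minCdistExcept_le_dDiag (c : Fin k → E2) (j : Fin k) (x : E2) :
    minCdistExcept k c j x ≤ dDiag x := by
  simpa using minCdistExcept_le c (Fin.castSucc_lt_last j).ne' x

lemma continuous_minCdistExcept (c : Fin k → E2) (j : Fin k) :
    Continuous (minCdistExcept k c j) :=
  Continuous.finset_inf'_apply _ fun j' _ => continuous_cdistC c j'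

lemma minCdist_eq_min (c : Fin k → E2) (j : Fin k) (x : E2) :
    minCdist k c x = min (dist x (c j)) (minCdistExcept k c j x) := by
  refine le_antisymm (le_min (by simpa using minCdist_le c j.castSucc x)
    (le_minCdistExcept fun j' _ => minCdist_le c j' x)) (le_minCdist fun j' => ?_)
  by_cases hj' : j' = j.castSucc
  · simp [hj']
  · exact (min_le_right _ _).trans (minCdistExcept_le c hj' x)

lemma minCdistExcept_update (c : Fin k → E2) (j : Fin k) (y x : E2) :
    minCdistExcept k (Function.update c j y) j x = minCdistExcept k c j x := by
  refine Finset.inf'_congr _ rfl fun j' hj' => ?_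
  cases j' using Fin.lastCases with
  | last => simp
  | cast i =>
    have hi : i ≠ j := fun h => (Finset.mem_erase.1 hj').1 (h ▸ rfl)
    simp [Function.update_of_ne hi]

lemma minCdistExcept_le_add_dist (c c' : Fin k → E2) (j : Fin k) (x : E2) :
    minCdistExcept k c j x ≤ minCdistExcept k c' j x + dist c c' := by
  rw [← sub_le_iff_le_add]
  exact le_minCdistExcept fun j' hj' => sub_le_iff_le_add.2
    ((minCdistExcept_le c hj' x).trans (cdistC_le_add_dist c c' j' x))

lemma minCdistExcept_pos {c : Fin k → E2} {j : Fin k} {x : E2} (hx : x ∈ Omega)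
    (hc : ∀ i ≠ j, c i ≠ x) : 0 < minCdistExcept k c j x := by
  refine (Finset.lt_inf'_iff _).2 fun j' hj' => ?_
  cases j' using Fin.lastCases with
  | last => simpa using dDiag_pos hx
  | cast i =>
    have hi : i ≠ j := fun h => (Finset.mem_erase.1 hj').1 (h ▸ rfl)
    simpa using (hc i hi).symm

lemma minCdist_eq_of_mem_Vcell {c : Fin k → E2} {j : Fin (k + 1)} {x : E2}
    (hx : x ∈ Vcell k c j) : minCdist k c x = cdistC k c j x := by
  refine le_antisymm (minCdist_le c j x) (le_minCdist fun j' => ?_)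
  rcases lt_trichotomy j' j with h | rfl | h
  · exact hx.2.1 j' h
  · rfl
  · exact (hx.2.2 j' h).le

lemma iUnion_Vcell (c : Fin k → E2) : ⋃ j, Vcell k c j = Omega := by
  refine Subset.antisymm (iUnion_subset fun j x hx => hx.1) fun x hx => ?_
  classical
  -- among the nearest centroids, the one of largest index owns `x`
  set T := Finset.univ.filter fun j => cdistC k c j x = minCdist k c x
  have hT : T.Nonempty := by
    obtain ⟨j, -, hj⟩ := Finset.exists_mem_eq_inf' Finset.univ_nonempty fun j => cdistC k c j x
    exact ⟨j, Finset.mem_filter.2 ⟨Finset.mem_univ _, hj.symm⟩⟩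
  have hmax : cdistC k c (T.max' hT) x = minCdist k c x := (Finset.mem_filter.1 (T.max'_mem hT)).2
  refine mem_iUnion.2 ⟨T.max' hT, hx, fun j' _ => hmax ▸ minCdist_le c j' x, fun j' hj' => ?_⟩
  refine hmax ▸ (minCdist_le c j' x).lt_of_ne fun h => hj'.not_ge ?_
  exact T.le_max' j' (Finset.mem_filter.2 ⟨Finset.mem_univ _, h.symm⟩)

end NearestCentroid

section Distortion

variable {k : ℕ}

def codebooks (k : ℕ) : Set (Fin k → E2) := {c | ∀ j, c j ∈ OmegaBar}

def distortionPow (p : ℝ) (μ : Measure E2) (k : ℕ) (c : Fin k → E2) : ℝ≥0∞ :=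
  ∫⁻ x in Omega, ENNReal.ofReal (minCdist k c x ^ p) ∂μ

lemma measurable_ofReal_rpow {p : ℝ} (hp : 0 < p) {f : E2 → ℝ} (hf : Continuous f) :
    Measurable fun x => ENNReal.ofReal (f x ^ p) :=
  (hf.rpow_const fun _ => Or.inr hp.le).measurable.ennreal_ofReal

lemma distortion_eq_rpow (p : ℝ) (μ : Measure E2) (c : Fin k → E2) :
    distortion p μ k c = distortionPow p μ k c ^ (1 / p) := by
  unfold distortion distortionPow
  rw [← iUnion_Vcell c, lintegral_iUnion (measurableSet_Vcell c) (pairwise_disjoint_Vcell c),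
    tsum_fintype]
  congr 1
  exact Finset.sum_congr rfl fun j _ => setLIntegral_congr_fun (measurableSet_Vcell c j)
    fun x hx => by rw [minCdist_eq_of_mem_Vcell hx]

lemma mem_Copt_iff {p : ℝ} (hp : 0 < p) {μ : Measure E2} {c : Fin k → E2} :
    c ∈ Copt p μ k ↔ c ∈ codebooks k ∧ IsMinOn (distortionPow p μ k) (codebooks k) c := by
  have key : ∀ c c' : Fin k → E2, distortion p μ k c ≤ distortion p μ k c' ↔
      distortionPow p μ k c ≤ distortionPow p μ k c' := fun c c' => by
    simp only [distortion_eq_rpow]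
    exact ENNReal.rpow_le_rpow_iff (by positivity)
  simp only [Copt, Rstar, mem_ofPred_eq, isMinOn_iff]
  refine and_congr_right fun hc => ⟨fun h c' hc' => (key _ _).1 (h ▸ iInf₂_le c' hc'),
    fun h => le_antisymm (le_iInf₂ fun c' hc' => (key _ _).2 (h c' hc')) (iInf₂_le c hc)⟩

lemma distortionPow_le_Pers {p : ℝ} (hp : 0 ≤ p) (μ : Measure E2) (c : Fin k → E2) :
    distortionPow p μ k c ≤ Pers p μ :=
  lintegral_mono fun x => ENNReal.ofReal_le_ofReal
    (Real.rpow_le_rpow (minCdist_nonneg c x) (minCdist_le_dDiag c x) hp)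

end Distortion

section OpenCell

variable {k : ℕ} {p : ℝ} {μ : Measure E2}

def openCell (k : ℕ) (c : Fin k → E2) (j : Fin k) : Set E2 :=
  {x ∈ Omega | dist x (c j) < minCdistExcept k c j x}

lemma isOpen_openCell (c : Fin k → E2) (j : Fin k) : IsOpen (openCell k c j) :=
  isOpen_Omega.inter
    (isOpen_lt (continuous_id.dist continuous_const) (continuous_minCdistExcept c j))

lemma openCell_subset_Vcell (c : Fin k → E2) (j : Fin k) :
    openCell k c j ⊆ Vcell k c j.castSucc := by
  refine fun x hx => ⟨hx.1, fun j' hj' => ?_, fun j' hj' => ?_⟩ <;>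
    rw [cdistC_castSucc]
  exacts [(hx.2.trans_le (minCdistExcept_le c hj'.ne x)).le,
    hx.2.trans_le (minCdistExcept_le c hj'.ne' x)]

lemma notMem_diagSet_of_openCell_nonempty {c : Fin k → E2} {j : Fin k}
    (h : (openCell k c j).Nonempty) : c j ∉ diagSet := fun hj =>
  let ⟨x, hx⟩ := h
  (hx.2.trans_le (minCdistExcept_le_dDiag c j x)).not_ge (dDiag_le_dist hj x)

lemma ne_of_openCell_nonempty {c : Fin k → E2} {i j : Fin k} (hij : i ≠ j)
    (h : (openCell k c j).Nonempty) : c i ≠ c j := fun hc =>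
  let ⟨x, hx⟩ := h
  (hx.2.trans_le (minCdistExcept_le c (Fin.castSucc_injective k |>.ne hij) x)).ne
    (by rw [cdistC_castSucc, hc])

lemma exists_mem_support_minCdistExcept_pos (hμΩ : μ Omegaᶜ = 0)
    (hsupp : ∃ s : Finset E2, s.card = k ∧ ↑s ⊆ msupport μ) (c : Fin k → E2) (j : Fin k) :
    ∃ x ∈ Omega ∩ μ.support, 0 < minCdistExcept k c j x := by
  by_contra! h
  obtain ⟨s, hs, hsμ⟩ := hsupp
  set C := (Finset.univ.erase j).image c
  have hU : μ (Omega ∩ {x | 0 < minCdistExcept k c j x}) = 0 := by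
    by_contra hU
    obtain ⟨x, ⟨hxΩ, hxpos⟩, hxμ⟩ := Measure.nonempty_inter_support_of_pos (pos_iff_ne_zero.2 hU)
    exact (h x ⟨hxΩ, hxμ⟩).not_gt hxpos
  have hC : μ (↑C)ᶜ = 0 := by
    refine measure_mono_null (fun x hx => ?_) (measure_union_null hU hμΩ)
    by_cases hxΩ : x ∈ Omega
    · refine Or.inl ⟨hxΩ, minCdistExcept_pos hxΩ fun i hi hci => hx ?_⟩
      exact Finset.mem_coe.2
        (Finset.mem_image.2 ⟨i, Finset.mem_erase.2 ⟨hi, Finset.mem_univ _⟩, hci⟩)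
    · exact Or.inr hxΩ
  -- `μ` would then live on the `k - 1` remaining centroids
  have hsC : s ⊆ C := by
    have := Measure.support_subset_of_isClosed C.finite_toSet.isClosed (mem_ae_iff.2 hC)
    exact fun x hx => Finset.mem_coe.1 (this (msupport_eq_support μ ▸ hsμ hx))
  have hCk : C.card ≤ k - 1 := Finset.card_image_le.trans (by simp)
  have := Finset.card_le_card hsC
  have := j.pos
  omega

lemma distortionPow_update_lt (hp : 0 < p) (hμp : Pers p μ < ⊤) {c : Fin k → E2} {j : Fin k}
    {x₀ : E2} (hx₀ : x₀ ∈ Omega ∩ μ.support) (hpos : 0 < minCdistExcept k c j x₀) :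
    distortionPow p μ k (Function.update c j x₀) <
      ∫⁻ x in Omega, ENNReal.ofReal (minCdistExcept k c j x ^ p) ∂μ := by
  set c' := Function.update c j x₀
  have hfi := ((distortionPow_le_Pers hp.le μ c').trans_lt hμp).ne
  have heq : ∀ x, minCdist k c' x = min (dist x x₀) (minCdistExcept k c j x) := fun x => by
    rw [minCdist_eq_min c' j, minCdistExcept_update]
    simp [c']
  have hcell : ∀ x ∈ openCell k c' j, dist x x₀ < minCdistExcept k c j x := fun x hx => by
    simpa [c', minCdistExcept_update] using hx.2
  have hx₀cell : x₀ ∈ openCell k c' j := ⟨hx₀.1, by simpa [c', minCdistExcept_update] using hpos⟩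
  have hμcell : μ.restrict Omega (openCell k c' j) ≠ 0 := by
    rw [Measure.restrict_apply (isOpen_openCell c' j).measurableSet,
      inter_eq_left.2 fun x hx => hx.1]
    exact ((Measure.mem_support_iff_forall x₀).1 hx₀.2 _
      ((isOpen_openCell c' j).mem_nhds hx₀cell)).ne'
  unfold distortionPow at hfi ⊢
  simp only [heq] at hfi ⊢
  refine lintegral_strict_mono_of_ae_le_of_ae_lt_on
    (measurable_ofReal_rpow hp (continuous_minCdistExcept c j)).aemeasurable hfi
    (.of_forall fun x => ?_) hμcell (.of_forall fun x hx => ?_)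
  · exact ENNReal.ofReal_le_ofReal (Real.rpow_le_rpow
      (le_min dist_nonneg (minCdistExcept_nonneg c j x)) (min_le_right _ _) hp.le)
  · rw [min_eq_left (hcell x hx).le, ENNReal.ofReal_lt_ofReal_iff (by
      linarith [Real.rpow_pos_of_pos (dist_nonneg.trans_lt (hcell x hx)) p])]
    exact Real.rpow_lt_rpow dist_nonneg (hcell x hx) hp

lemma lintegral_minCdistExcept_le_distortionPow {c : Fin k → E2} {j : Fin k}
    (h : μ (openCell k c j) = 0) :
    ∫⁻ x in Omega, ENNReal.ofReal (minCdistExcept k c j x ^ p) ∂μ ≤ distortionPow p μ k c := by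
  refine lintegral_mono_ae ?_
  filter_upwards [ae_restrict_mem isOpen_Omega.measurableSet,
    ae_restrict_of_ae (measure_eq_zero_iff_ae_notMem.1 h)] with x hxΩ hx
  rw [minCdist_eq_min c j, min_eq_right (not_lt.1 fun h' => hx ⟨hxΩ, h'⟩)]

lemma measure_openCell_pos (hp : 0 < p) (hμΩ : μ Omegaᶜ = 0) (hμp : Pers p μ < ⊤)
    (hsupp : ∃ s : Finset E2, s.card = k ∧ ↑s ⊆ msupport μ) {c : Fin k → E2}
    (hc : c ∈ Copt p μ k) (j : Fin k) : 0 < μ (openCell k c j) := by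
  rw [mem_Copt_iff hp] at hc
  obtain ⟨x₀, hx₀, hpos⟩ := exists_mem_support_minCdistExcept_pos hμΩ hsupp c j
  have hadm : Function.update c j x₀ ∈ codebooks k :=
    Function.forall_update_iff c (p := fun _ y => y ∈ OmegaBar) |>.2
      ⟨Or.inl hx₀.1, fun i _ => hc.1 i⟩
  refine pos_iff_ne_zero.2 fun h => ?_
  -- otherwise `c_j` is useless, and moving it to `x₀` would beat the optimum
  exact (isMinOn_iff.1 hc.2 _ hadm).not_gt
    ((distortionPow_update_lt hp hμp hx₀ hpos).trans_le
      (lintegral_minCdistExcept_le_distortionPow h))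

lemma mem_Omega_of_mem_Copt (hp : 0 < p) (hμΩ : μ Omegaᶜ = 0) (hμp : Pers p μ < ⊤)
    (hsupp : ∃ s : Finset E2, s.card = k ∧ ↑s ⊆ msupport μ) {c : Fin k → E2}
    (hc : c ∈ Copt p μ k) (j : Fin k) : c j ∈ Omega :=
  (hc.1 j).resolve_right <| notMem_diagSet_of_openCell_nonempty
    (nonempty_of_measure_ne_zero (measure_openCell_pos hp hμΩ hμp hsupp hc j).ne')

lemma injective_of_mem_Copt (hp : 0 < p) (hμΩ : μ Omegaᶜ = 0) (hμp : Pers p μ < ⊤)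
    (hsupp : ∃ s : Finset E2, s.card = k ∧ ↑s ⊆ msupport μ) {c : Fin k → E2}
    (hc : c ∈ Copt p μ k) : Function.Injective c := fun i j hij => by
  by_contra hne
  exact ne_of_openCell_nonempty hne
    (nonempty_of_measure_ne_zero (measure_openCell_pos hp hμΩ hμp hsupp hc j).ne') hij

end OpenCell

section Compactness

variable {k : ℕ} {p : ℝ} {μ : Measure E2}

def ConvergesOrEscapes (v : ℕ → E2) (a : E2) : Prop :=
  Tendsto v atTop (𝓝 a) ∨ (a ∈ diagSet ∧ Tendsto (fun n => ‖v n‖) atTop atTop)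

lemma ConvergesOrEscapes.comp {v : ℕ → E2} {a : E2} (h : ConvergesOrEscapes v a) {ψ : ℕ → ℕ}
    (hψ : StrictMono ψ) : ConvergesOrEscapes (v ∘ ψ) a :=
  h.imp (·.comp hψ.tendsto_atTop) fun h => ⟨h.1, h.2.comp hψ.tendsto_atTop⟩

lemma ConvergesOrEscapes.mem_OmegaBar {v : ℕ → E2} {a : E2} (h : ConvergesOrEscapes v a)
    (hv : ∀ n, v n ∈ OmegaBar) : a ∈ OmegaBar :=
  h.elim (isClosed_OmegaBar.mem_of_tendsto · (.of_forall hv)) fun h =>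
    diagSet_subset_OmegaBar h.1

lemma ConvergesOrEscapes.tendsto_min_dDiag_dist {v : ℕ → E2} {a : E2}
    (h : ConvergesOrEscapes v a) (x : E2) :
    Tendsto (fun n => min (dDiag x) (dist x (v n))) atTop (𝓝 (min (dDiag x) (dist x a))) := by
  rcases h with h | ⟨ha, h⟩
  · exact tendsto_const_nhds.min (tendsto_const_nhds.dist h)
  · rw [min_eq_left (dDiag_le_dist ha x)]
    refine tendsto_const_nhds.congr' ?_
    filter_upwards [h.eventually_ge_atTop (‖x‖ + dDiag x)] with n hn
    refine (min_eq_left ?_).symm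
    linarith [norm_sub_norm_le (v n) x, dist_comm x (v n), dist_eq_norm (v n) x]

lemma exists_strictMono_forall_of_finite {ι : Type*} [Finite ι] (P : ι → (ℕ → ℕ) → Prop)
    (hP : ∀ i (φ ψ : ℕ → ℕ), StrictMono ψ → P i φ → P i (φ ∘ ψ))
    (hex : ∀ i φ, ∃ ψ : ℕ → ℕ, StrictMono ψ ∧ P i (φ ∘ ψ)) : ∃ φ, StrictMono φ ∧ ∀ i, P i φ := by
  classical
  have := Fintype.ofFinite ι
  suffices ∀ s : Finset ι, ∃ φ, StrictMono φ ∧ ∀ i ∈ s, P i φ by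
    obtain ⟨φ, hφ, h⟩ := this Finset.univ
    exact ⟨φ, hφ, fun i => h i (Finset.mem_univ i)⟩
  intro s
  induction s using Finset.induction_on with
  | empty => exact ⟨id, strictMono_id, by simp⟩
  | insert a s _ ih =>
    obtain ⟨φ, hφ, h⟩ := ih
    obtain ⟨ψ, hψ, ha⟩ := hex a φ
    refine ⟨φ ∘ ψ, hφ.comp hψ, fun i hi => ?_⟩
    rcases Finset.mem_insert.1 hi with rfl | hi
    exacts [ha, hP i φ ψ hψ (h i hi)]

lemma exists_subseq_convergesOrEscapes (v : ℕ → E2) :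
    ∃ ψ, StrictMono ψ ∧ ∃ a, ConvergesOrEscapes (v ∘ ψ) a := by
  by_cases h : Tendsto (fun n => ‖v n‖) atTop atTop
  · exact ⟨id, strictMono_id, 0, .inr ⟨zero_mem_diagSet, h⟩⟩
  · obtain ⟨M, hM⟩ : ∃ M, ∃ᶠ n in atTop, v n ∈ Metric.ball (0 : E2) M := by
      simpa [tendsto_atTop, Filter.not_eventually, Filter.frequently_atTop] using h
    obtain ⟨a, -, ψ, hψ, ha⟩ := tendsto_subseq_of_frequently_bounded Metric.isBounded_ball hM
    exact ⟨ψ, hψ, a, .inl ha⟩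

lemma exists_subseq_forall_convergesOrEscapes (u : ℕ → Fin k → E2) :
    ∃ φ, StrictMono φ ∧ ∃ c : Fin k → E2, ∀ i, ConvergesOrEscapes (fun n => u (φ n) i) (c i) := by
  obtain ⟨φ, hφ, h⟩ := exists_strictMono_forall_of_finite
    (fun i φ => ∃ a, ConvergesOrEscapes (fun n => u (φ n) i) a)
    (fun _ _ _ hψ ⟨a, ha⟩ => ⟨a, ha.comp hψ⟩)
    (fun i φ => exists_subseq_convergesOrEscapes fun n => u (φ n) i)
  choose c hc using h
  exact ⟨φ, hφ, c, hc⟩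

lemma minCdist_eq_inf'_min_dDiag (c : Fin k → E2) (x : E2) :
    minCdist k c x = Finset.univ.inf' Finset.univ_nonempty
      fun j => min (dDiag x) (cdistC k c j x) :=
  le_antisymm (Finset.le_inf' _ _ fun j _ => le_min (minCdist_le_dDiag c x) (minCdist_le c j x))
    (le_minCdist fun j => (Finset.inf'_le _ (Finset.mem_univ j)).trans (min_le_right _ _))

lemma tendsto_minCdist {u : ℕ → Fin k → E2} {c : Fin k → E2}
    (hu : ∀ i, ConvergesOrEscapes (fun n => u n i) (c i)) (x : E2) :
    Tendsto (fun n => minCdist k (u n) x) atTop (𝓝 (minCdist k c x)) := by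
  simp only [minCdist_eq_inf'_min_dDiag]
  refine Tendsto.finset_inf'_nhds_apply _ fun j _ => ?_
  cases j using Fin.lastCases with
  | last => simp
  | cast i => simpa using (hu i).tendsto_min_dDiag_dist x

lemma distortionPow_le_liminf (hp : 0 < p) (μ : Measure E2) {u : ℕ → Fin k → E2}
    {c : Fin k → E2} (hu : ∀ i, ConvergesOrEscapes (fun n => u n i) (c i)) :
    distortionPow p μ k c ≤ liminf (fun n => distortionPow p μ k (u n)) atTop := by
  have hcont : Continuous fun t : ℝ => ENNReal.ofReal (t ^ p) :=
    ENNReal.continuous_ofReal.comp (Real.continuous_rpow_const hp.le)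
  calc distortionPow p μ k c
      = ∫⁻ x in Omega, liminf (fun n => ENNReal.ofReal (minCdist k (u n) x ^ p)) atTop ∂μ :=
        lintegral_congr fun x => ((hcont.tendsto _).comp (tendsto_minCdist hu x)).liminf_eq.symm
    _ ≤ _ := lintegral_liminf_le fun n => measurable_ofReal_rpow hp (continuous_minCdist _)

lemma Copt_nonempty (hp : 0 < p) (μ : Measure E2) (k : ℕ) : (Copt p μ k).Nonempty := by
  set S := distortionPow p μ k '' codebooks k
  obtain ⟨v, -, hv, hvS⟩ := exists_seq_tendsto_sInf (S := S)
    ⟨_, 0, fun _ => diagSet_subset_OmegaBar zero_mem_diagSet, rfl⟩ (OrderBot.bddBelow S)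
  choose u hu huv using hvS
  obtain ⟨φ, hφ, c, hc⟩ := exists_subseq_forall_convergesOrEscapes u
  refine ⟨c, (mem_Copt_iff hp).2 ⟨fun i => (hc i).mem_OmegaBar fun n => hu (φ n) i,
    isMinOn_iff.2 fun c' hc' => ?_⟩⟩
  calc distortionPow p μ k c ≤ liminf (fun n => distortionPow p μ k (u (φ n))) atTop :=
        distortionPow_le_liminf hp μ hc
    _ = sInf S := by
        simp only [huv]
        exact (hv.comp hφ.tendsto_atTop).liminf_eq
    _ ≤ distortionPow p μ k c' := sInf_le ⟨c', hc', rfl⟩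

lemma isCompact_Copt (hp : 0 < p) (hμΩ : μ Omegaᶜ = 0) (hμp : Pers p μ < ⊤)
    (hsupp : ∃ s : Finset E2, s.card = k ∧ ↑s ⊆ msupport μ) : IsCompact (Copt p μ k) := by
  refine IsSeqCompact.isCompact fun u hu => ?_
  obtain ⟨φ, hφ, c, hc⟩ := exists_subseq_forall_convergesOrEscapes u
  have hu' := fun n => (mem_Copt_iff hp).1 (hu n)
  have hcC : c ∈ Copt p μ k := by
    refine (mem_Copt_iff hp).2 ⟨fun i => (hc i).mem_OmegaBar fun n => (hu' (φ n)).1 i,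
      isMinOn_iff.2 fun c' hc' => (distortionPow_le_liminf hp μ hc).trans ?_⟩
    exact liminf_le_of_frequently_le' (.of_forall fun n => isMinOn_iff.1 (hu' (φ n)).2 c' hc')
  -- optimal centroids stay off the diagonal, so none of them escapes
  refine ⟨c, hcC, φ, hφ, tendsto_pi_nhds.2 fun i => (hc i).resolve_right fun h => ?_⟩
  exact notMem_diagSet_of_mem_Omega (mem_Omega_of_mem_Copt hp hμΩ hμp hsupp hcC i) h.1

lemma lowerSemicontinuous_measure_openCell (μ : Measure E2) (j : Fin k) :
    LowerSemicontinuous fun c => μ (openCell k c j) := by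
  intro c y hy
  -- a margin of `2 / (n + 1)` survives moving the codebook by less than `1 / (n + 1)`
  set O : ℕ → Set E2 :=
    fun n => {x ∈ Omega | dist x (c j) + 2 * (1 / (n + 1)) < minCdistExcept k c j x}
  have hmono : Monotone O := fun n m hnm x hx => ⟨hx.1, lt_of_le_of_lt (by gcongr) hx.2⟩
  have hO : ⋃ n, O n = openCell k c j := by
    refine Subset.antisymm (iUnion_subset fun n x hx => ⟨hx.1, ?_⟩) fun x hx => ?_
    · linarith [hx.2, Nat.one_div_pos_of_nat (α := ℝ) (n := n)]
    · obtain ⟨n, hn⟩ := exists_nat_one_div_lt (half_pos (sub_pos.2 hx.2))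
      exact mem_iUnion.2 ⟨n, hx.1, by linarith⟩
  obtain ⟨n, hn⟩ := ((tendsto_measure_iUnion_atTop hmono).eventually
    (lt_mem_nhds (show y < μ (⋃ n, O n) by rwa [hO]))).exists
  filter_upwards [Metric.ball_mem_nhds c (Nat.one_div_pos_of_nat (n := n))] with c' hc'
  refine hn.trans_le (measure_mono fun x hx => ⟨hx.1, ?_⟩)
  linarith [hx.2, dist_triangle x (c j) (c' j), minCdistExcept_le_add_dist c c' j x,
    dist_le_pi_dist c' c j, dist_comm c c', dist_comm (c' j) (c j), Metric.mem_ball.1 hc']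

lemma exists_pos_le_measure_openCell (μ : Measure E2) {C : Set (Fin k → E2)} (hC : IsCompact C)
    (hne : C.Nonempty) (hpos : ∀ c ∈ C, ∀ j, 0 < μ (openCell k c j)) :
    ∃ ε > 0, ∀ c ∈ C, ∀ j, ε ≤ μ (openCell k c j) := by
  choose cmin hcmin hmin using fun j : Fin k =>
    ((lowerSemicontinuous_measure_openCell μ j).lowerSemicontinuousOn C).exists_isMinOn hne hC
  refine ⟨Finset.univ.inf fun j => μ (openCell k (cmin j) j),
    (Finset.lt_inf_iff ENNReal.zero_lt_top).2 fun j _ => hpos _ (hcmin j) j, fun c hc j => ?_⟩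
  exact (Finset.inf_le (Finset.mem_univ j)).trans (isMinOn_iff.1 (hmin j) c hc)

end Compactness

section CentroidSeparation

variable {k : ℕ}

lemma continuous_cdistPt (j j' : Fin (k + 1)) :
    Continuous fun c : Fin k → E2 => cdistPt k c j j' := by
  unfold cdistPt
  split_ifs
  · exact (continuous_apply _).dist (continuous_apply _)
  · exact continuous_dDiag.comp (continuous_apply _)
  · exact continuous_dDiag.comp (continuous_apply _)
  · exact continuous_const

lemma cdistPt_pos {c : Fin k → E2} (hΩ : ∀ i, c i ∈ Omega) (hc : Function.Injective c)
    {j j' : Fin (k + 1)} (hjj' : j ≠ j') : 0 < cdistPt k c j j' := by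
  cases j using Fin.lastCases with
  | last =>
    cases j' using Fin.lastCases with
    | last => exact absurd rfl hjj'
    | cast i' => simpa [cdistPt] using dDiag_pos (hΩ i')
  | cast i =>
    cases j' using Fin.lastCases with
    | last => simpa [cdistPt] using dDiag_pos (hΩ i)
    | cast i' => simpa [cdistPt] using hc.ne fun h => hjj' (congrArg _ h)

lemma isCompact_setOf_cdistPt {C : Set (Fin k → E2)} (hC : IsCompact C) :
    IsCompact {d : ℝ | ∃ c ∈ C, ∃ j j' : Fin (k + 1), j ≠ j' ∧ d = cdistPt k c j j'} := by
  have hF : Continuous fun z : (Fin k → E2) × Fin (k + 1) × Fin (k + 1) =>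
      cdistPt k z.1 z.2.1 z.2.2 :=
    continuous_prod_of_discrete_right.2 fun q => continuous_cdistPt q.1 q.2
  convert (hC.prod (toFinite {q : Fin (k + 1) × Fin (k + 1) | q.1 ≠ q.2}).isCompact).image hF
    using 1
  ext d
  constructor
  · rintro ⟨c, hc, j, j', hjj', rfl⟩
    exact ⟨(c, j, j'), ⟨hc, hjj'⟩, rfl⟩
  · rintro ⟨⟨c, j, j'⟩, ⟨hc, hjj'⟩, rfl⟩
    exact ⟨c, hc, j, j', hjj', rfl⟩

end CentroidSeparation

/-- Corollary: positivity of `D_min` and `m_min`.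
If `μ ∈ M^p` has at least `k` support points, then the infimum `D_min` over optimal
codebooks of the pairwise distances between centroids (including the diagonal) and the
infimum `m_min` over optimal codebooks of the cell masses `μ(V_j(c^*))` are both positive. -/
theorem statement7 (p : ℝ) (hp : 1 ≤ p) (k : ℕ) (hk : 1 ≤ k) (μ : Measure E2)
    (hμΩ : μ Omegaᶜ = 0) (hμp : Pers p μ < ⊤)
    (hsupp : ∃ s : Finset E2, s.card = k ∧ ↑s ⊆ msupport μ) :
    0 < sInf {d : ℝ | ∃ c ∈ Copt p μ k, ∃ j j' : Fin (k+1), j ≠ j' ∧ d = cdistPt k c j j'} ∧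
    0 < sInf {m : ℝ≥0∞ | ∃ c ∈ Copt p μ k, ∃ j : Fin k, m = μ (Vcell k c j.castSucc)} := by
  have hp0 : 0 < p := by linarith
  have hK := isCompact_Copt hp0 hμΩ hμp hsupp
  obtain ⟨c₀, hc₀⟩ := Copt_nonempty hp0 μ k
  constructor
  · have hne : (0 : Fin (k + 1)) ≠ Fin.last k := by simp [Fin.ext_iff]; omega
    obtain ⟨c, hc, j, j', hjj', hd⟩ :=
      (isCompact_setOf_cdistPt hK).sInf_mem ⟨_, c₀, hc₀, 0, Fin.last k, hne, rfl⟩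
    rw [hd]
    exact cdistPt_pos (mem_Omega_of_mem_Copt hp0 hμΩ hμp hsupp hc)
      (injective_of_mem_Copt hp0 hμΩ hμp hsupp hc) hjj'
  · obtain ⟨ε, hε, hle⟩ := exists_pos_le_measure_openCell μ hK ⟨c₀, hc₀⟩
      fun c hc j => measure_openCell_pos hp0 hμΩ hμp hsupp hc j
    refine hε.trans_le (le_sInf ?_)
    rintro m ⟨c, hc, j, rfl⟩
    exact (hle c hc j).trans (measure_mono (openCell_subset_Vcell c j))

end
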